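/- The standard pattern T(10,3) = {(10x+3y, y) : x, y ∈ ℤ} is a (4,4) broadcast on the infinite grid; consequently there is a (4,4) broadcast of density 1/10, which is strictly less than 1/8, the optimal density of a (3,2) broadcast, so the optimal (3,2) and (4,4) broadcast densities are not equal. -/

import Mathlib

open Filter Topology

/-- Graph (L¹) distance on the infinite grid ℤ×ℤ. -/
def gridDist (u v : ℤ × ℤ) : ℕ := (u.1 - v.1).natAbs + (u.2 - v.2).natAbs

open Classical in
/-- Total signal received at `v` from towers of strength `t` located at the points of `S`:
the finite sum `∑_{T ∈ S, dist(v,T) < t} (t − dist(v,T))`. -/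
noncomputable def totalSignal (t : ℕ) (S : Set (ℤ × ℤ)) (v : ℤ × ℤ) : ℕ :=
  ∑ T ∈ (Finset.Icc (v.1 - (t : ℤ)) (v.1 + (t : ℤ)) ×ˢ
      Finset.Icc (v.2 - (t : ℤ)) (v.2 + (t : ℤ))).filter
      (fun T => T ∈ S ∧ gridDist v T < t),
    (t - gridDist v T)

/-- `S` is a `(t,r)` broadcast if every vertex receives total signal at least `r`. -/
def IsBroadcast (t r : ℕ) (S : Set (ℤ × ℤ)) : Prop :=
  ∀ v : ℤ × ℤ, r ≤ totalSignal t S v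

/-- The standard pattern `T(d,e) = {(dx+ey, y) : x, y ∈ ℤ}`. -/
def stdPattern (d e : ℤ) : Set (ℤ × ℤ) := {p | ∃ x y : ℤ, p = (d * x + e * y, y)}

open Classical in
/-- The number of points of `S` in the square `V_n = {(a,b) : |a| ≤ n, |b| ≤ n}`. -/
noncomputable def gridCount (S : Set (ℤ × ℤ)) (n : ℕ) : ℕ :=
  ((Finset.Icc (-(n : ℤ)) (n : ℤ) ×ˢ Finset.Icc (-(n : ℤ)) (n : ℤ)).filter
    (fun v => v ∈ S)).card

/-!
The pattern `T(d, e)` is the lattice `{p | d ∣ p.1 - e * p.2}`, and translating by a lattice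
point preserves both the pattern and grid distances, hence the signal. Every vertex `(a, b)` is
a lattice translate of `((a - e * b) % d, 0)`, so being a broadcast reduces to `d` finite checks
at the vertices `(i, 0)`, `0 ≤ i < d`. For the density, row `q` of the square `V_n` meets the
pattern in the residue class of `e * q` modulo `d`, which has `(2n + 1)/d ± 1` elements.
-/

open Finset

theorem gridDist_add_right (u v w : ℤ × ℤ) : gridDist (u + w) (v + w) = gridDist u v := by
  simp [gridDist]

theorem totalSignal_add_right (t : ℕ) {S : Set (ℤ × ℤ)} {w : ℤ × ℤ}
    (hS : ∀ p, p + w ∈ S ↔ p ∈ S) (v : ℤ × ℤ) :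
    totalSignal t S (v + w) = totalSignal t S v := by
  unfold totalSignal
  refine sum_nbij' (· - w) (· + w) ?_ ?_ (fun _ _ => sub_add_cancel _ _)
    (fun _ _ => add_sub_cancel_right _ _) ?_
  · intro T hT
    simp only [mem_filter, mem_product, mem_Icc,
      Prod.fst_add, Prod.snd_add, Prod.fst_sub, Prod.snd_sub] at hT ⊢
    rw [← hS, sub_add_cancel, ← gridDist_add_right v _ w, sub_add_cancel]
    exact ⟨by omega, hT.2⟩
  · intro T hT
    simp only [mem_filter, mem_product, mem_Icc,
      Prod.fst_add, Prod.snd_add] at hT ⊢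
    rw [hS, gridDist_add_right]
    exact ⟨by omega, hT.2⟩
  · intro T _
    rw [← gridDist_add_right v _ w, sub_add_cancel]

theorem mem_stdPattern_iff {d e : ℤ} {p : ℤ × ℤ} : p ∈ stdPattern d e ↔ d ∣ p.1 - e * p.2 := by
  constructor
  · rintro ⟨x, y, rfl⟩
    simp
  · rintro ⟨x, hx⟩
    exact ⟨x, p.2, Prod.ext (by linarith) rfl⟩

theorem add_mem_stdPattern_iff {d e : ℤ} {w : ℤ × ℤ} (hw : w ∈ stdPattern d e) (p : ℤ × ℤ) :
    p + w ∈ stdPattern d e ↔ p ∈ stdPattern d e := by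
  rw [mem_stdPattern_iff] at hw
  simp only [mem_stdPattern_iff, Prod.fst_add, Prod.snd_add]
  rw [show p.1 + w.1 - e * (p.2 + w.2) = (p.1 - e * p.2) + (w.1 - e * w.2) by ring]
  exact dvd_add_left hw

theorem totalSignal_stdPattern_eq_emod (t : ℕ) (d e : ℤ) (v : ℤ × ℤ) :
    totalSignal t (stdPattern d e) v = totalSignal t (stdPattern d e) ((v.1 - e * v.2) % d, 0) := by
  set r := (v.1 - e * v.2) % d
  have hw : (v.1 - r, v.2) ∈ stdPattern d e := by
    rw [mem_stdPattern_iff, sub_right_comm]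
    exact Int.dvd_self_sub_of_emod_eq rfl
  rw [← totalSignal_add_right t (add_mem_stdPattern_iff hw) (r, 0)]
  congr 1
  ext <;> simp

theorem isBroadcast_stdPattern_of_forall_Ico {t r : ℕ} {d : ℤ} (hd : 0 < d) (e : ℤ)
    (h : ∀ i ∈ Ico 0 d, r ≤ totalSignal t (stdPattern d e) (i, 0)) :
    IsBroadcast t r (stdPattern d e) := by
  intro v
  rw [totalSignal_stdPattern_eq_emod]
  exact h _ (mem_Ico.2 ⟨Int.emod_nonneg _ hd.ne', Int.emod_lt_of_pos _ hd⟩)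

theorem totalSignal_stdPattern_eq_sum (t : ℕ) (d e : ℤ) (v : ℤ × ℤ) :
    totalSignal t (stdPattern d e) v =
      ∑ T ∈ (Icc (v.1 - (t : ℤ)) (v.1 + (t : ℤ)) ×ˢ
        Icc (v.2 - (t : ℤ)) (v.2 + (t : ℤ))).filter
        (fun T => d ∣ T.1 - e * T.2 ∧ gridDist v T < t), (t - gridDist v T) := by
  unfold totalSignal
  simp only [mem_stdPattern_iff]

theorem isBroadcast_stdPattern_ten_three : IsBroadcast 4 4 (stdPattern 10 3) := by
  refine isBroadcast_stdPattern_of_forall_Ico (by norm_num) 3 fun i hi => ?_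
  rw [totalSignal_stdPattern_eq_sum]
  revert i
  decide

theorem abs_card_Ico_filter_modEq_sub_le {r : ℤ} (hr : 0 < r) {a b : ℤ} (hab : a ≤ b) (v : ℤ) :
    |(#{x ∈ Ico a b | x ≡ v [ZMOD r]} : ℚ) - (b - a) / r| ≤ 1 := by
  have hcard := congrArg (Int.cast : ℤ → ℚ) (Int.Ico_filter_modEq_card a b hr v)
  set x : ℚ := (a - v) / r
  set y : ℚ := (b - v) / r
  have hxy : y - x = (b - a) / r := by simp only [x, y]; ring
  have hmono : ⌈x⌉ ≤ ⌈y⌉ := Int.ceil_mono <|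
    div_le_div_of_nonneg_right (by simpa using hab) (by exact_mod_cast hr.le)
  rw [max_eq_left (sub_nonneg.2 hmono)] at hcard
  push_cast at hcard
  rw [hcard, ← hxy, abs_le]
  constructor <;> linarith [Int.le_ceil x, Int.ceil_lt_add_one x, Int.le_ceil y,
    Int.ceil_lt_add_one y]

theorem gridCount_stdPattern_eq_sum (d e : ℤ) (n : ℕ) :
    gridCount (stdPattern d e) n =
      ∑ q ∈ Icc (-(n : ℤ)) n, #{p ∈ Icc (-(n : ℤ)) n | p ≡ e * q [ZMOD d]} := by
  rw [gridCount, card_filter, sum_product_right]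
  refine sum_congr rfl fun q _ => ?_
  rw [card_filter]
  refine sum_congr rfl fun p _ => ?_
  simp only [mem_stdPattern_iff, Int.modEq_comm (a := p), Int.modEq_iff_dvd]

theorem abs_gridCount_stdPattern_sub_le {d : ℤ} (hd : 0 < d) (e : ℤ) (n : ℕ) :
    |(gridCount (stdPattern d e) n : ℚ) - (2 * n + 1) ^ 2 / d| ≤ (2 * n + 1 : ℚ) := by
  have hrow (q : ℤ) :
      |(#{p ∈ Icc (-(n : ℤ)) n | p ≡ e * q [ZMOD d]} : ℚ) - (2 * n + 1) / d| ≤ (1 : ℚ) := by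
    rw [← Ico_add_one_right_eq_Icc]
    convert abs_card_Ico_filter_modEq_sub_le hd (show -(n : ℤ) ≤ n + 1 by omega) (e * q) using 3
    push_cast; ring
  have hcard : (#(Icc (-(n : ℤ)) n) : ℚ) = 2 * n + 1 := by
    rw [Int.card_Icc, show (n : ℤ) + 1 - -n = ((2 * n + 1 : ℕ) : ℤ) by push_cast; ring,
      Int.toNat_natCast]
    push_cast; rfl
  calc |(gridCount (stdPattern d e) n : ℚ) - (2 * n + 1) ^ 2 / d|
      = |∑ q ∈ Icc (-(n : ℤ)) n,
          ((#{p ∈ Icc (-(n : ℤ)) n | p ≡ e * q [ZMOD d]} : ℚ) - (2 * n + 1) / d)| := by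
        rw [gridCount_stdPattern_eq_sum, sum_sub_distrib, sum_const, nsmul_eq_mul, hcard]
        push_cast; ring_nf
    _ ≤ ∑ q ∈ Icc (-(n : ℤ)) n, 1 := (abs_sum_le_sum_abs _ _).trans (sum_le_sum fun q _ => hrow q)
    _ = 2 * n + 1 := by rw [sum_const, nsmul_one, hcard]

theorem tendsto_gridCount_stdPattern {d : ℤ} (hd : 0 < d) (e : ℤ) :
    Tendsto (fun n : ℕ => (gridCount (stdPattern d e) n : ℝ) / (2 * n + 1) ^ 2) atTop
      (𝓝 (1 / (d : ℝ))) := by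
  have hbound (n : ℕ) : |(gridCount (stdPattern d e) n : ℝ) / (2 * n + 1) ^ 2 - 1 / (d : ℝ)|
      ≤ 1 / ((n : ℝ) + 1) := by
    set m : ℝ := 2 * n + 1 with hm
    have hcount : |(gridCount (stdPattern d e) n : ℝ) - m ^ 2 / d| ≤ m := by
      have h := (Rat.cast_le (K := ℝ)).2 (abs_gridCount_stdPattern_sub_le hd e n)
      push_cast at h
      exact h
    have hm0 : 0 < m := by positivity
    have hd0 : (d : ℝ) ≠ 0 := by exact_mod_cast hd.ne'
    rw [show (gridCount (stdPattern d e) n : ℝ) / m ^ 2 - 1 / d =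
        ((gridCount (stdPattern d e) n : ℝ) - m ^ 2 / d) / m ^ 2 by field_simp,
      abs_div, abs_of_pos (pow_pos hm0 2), div_le_div_iff₀ (by positivity) (by positivity)]
    nlinarith
  exact tendsto_iff_norm_sub_tendsto_zero.2 <|
    squeeze_zero (fun _ => norm_nonneg _) hbound tendsto_one_div_add_atTop_nhds_zero_nat

theorem stmt16 :
    IsBroadcast 4 4 (stdPattern 10 3) ∧
    (∃ S : Set (ℤ × ℤ), IsBroadcast 4 4 S ∧
      Filter.Tendsto (fun n : ℕ => (gridCount S n : ℝ) / (2 * n + 1) ^ 2)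
        Filter.atTop (nhds (1 / 10))) ∧
    (1 : ℝ) / 10 < 1 / 8 := by
  have hdensity := tendsto_gridCount_stdPattern (by norm_num : (0 : ℤ) < 10) 3
  push_cast at hdensity
  exact ⟨isBroadcast_stdPattern_ten_three,
    ⟨stdPattern 10 3, isBroadcast_stdPattern_ten_three, hdensity⟩, by norm_num⟩
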